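/- Let J be a graded ideal of R = F_2[U,Q]/(Q^2) with U^{-1}J = U^{-1}R. Define i = min{k ≥ 0 : U^k ∈ J} and j = min{k ≥ 0 : Q·U^k ∈ J}. Then both minima exist, j ≤ i, and J = (U^i, Q·U^j). -/

import Mathlib

open MvPolynomial

noncomputable section

/-- The ring `R = F₂[U,Q]/(Q²)`, where `U = X 0` and `Q = X 1`. -/
abbrev RUQ : Type :=
  MvPolynomial (Fin 2) (ZMod 2) ⧸
    Ideal.span {(X 1 : MvPolynomial (Fin 2) (ZMod 2)) ^ 2}

/-- The quotient map. -/
noncomputable def mkR : MvPolynomial (Fin 2) (ZMod 2) →+* RUQ :=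
  Ideal.Quotient.mk _

/-- The class of `U`. -/
noncomputable def U : RUQ := mkR (X 0)

/-- The class of `Q`. -/
noncomputable def Q : RUQ := mkR (X 1)

/-- The grading weights: `deg U = 2`, `deg Q = 1`. -/
def wt : Fin 2 → ℕ := ![2, 1]

/-- `x ∈ R` is homogeneous of degree `n` (with respect to `deg U = 2`, `deg Q = 1`)
if it is represented by a weighted homogeneous polynomial of degree `n`. -/
def IsHomog (x : RUQ) (n : ℕ) : Prop :=
  ∃ p : MvPolynomial (Fin 2) (ZMod 2), p.IsWeightedHomogeneous wt n ∧ mkR p = x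

/-- An ideal is graded if it is generated by its homogeneous elements. -/
def IsGradedIdeal (J : Ideal RUQ) : Prop :=
  J = Ideal.span {x : RUQ | x ∈ J ∧ ∃ n : ℕ, IsHomog x n}

/-! Every monomial divisible by `Q²` vanishes in `R`, and among the remaining monomials the weight
determines the exponents, so a homogeneous element of degree `n` is `0` or `Q^(n % 2) * U^(n / 2)`.
A graded ideal is therefore generated by elements `Uᵐ` and `Q·Uᵐ`, each a multiple of `Uⁱ` or
`Q·Uʲ` by minimality of `i` and `j`. That `J` becomes the unit ideal after inverting `U` says
exactly that `J` meets the powers of `U`. -/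

lemma weight_wt_apply (d : Fin 2 →₀ ℕ) : Finsupp.weight wt d = 2 * d 0 + d 1 := by
  simp [Finsupp.weight_apply, Finsupp.sum_fintype, Fin.sum_univ_two, wt, mul_comm]

lemma eq_of_weight_wt_eq {d : Fin 2 →₀ ℕ} {n : ℕ} (hd : Finsupp.weight wt d = n) (h1 : d 1 < 2) :
    d = Finsupp.single 0 (n / 2) + Finsupp.single 1 (n % 2) := by
  rw [weight_wt_apply] at hd
  ext i
  fin_cases i <;> simp <;> omega

lemma mkR_monomial_of_two_le {d : Fin 2 →₀ ℕ} (hd : 2 ≤ d 1) (c : ZMod 2) :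
    mkR (monomial d c) = 0 := by
  have hle : Finsupp.single 1 2 ≤ d := Finsupp.single_le_iff.2 hd
  rw [← add_tsub_cancel_of_le hle, ← one_mul c, ← monomial_mul, ← X_pow_eq_monomial, map_mul]
  have hQ2 : mkR (X 1 ^ 2) = 0 := Ideal.Quotient.eq_zero_iff_mem.2 (Ideal.subset_span rfl)
  rw [hQ2, zero_mul]

lemma mkR_monomial_single_add_single (a b : ℕ) :
    mkR (monomial (Finsupp.single 0 a + Finsupp.single 1 b) 1) = Q ^ b * U ^ a := by
  rw [← one_mul (1 : ZMod 2), ← monomial_mul, ← X_pow_eq_monomial, ← X_pow_eq_monomial, map_mul,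
    map_pow, map_pow, mul_comm]
  rfl

lemma IsHomog.eq_zero_or_eq_Q_pow_mul_U_pow {x : RUQ} {n : ℕ} (h : IsHomog x n) :
    x = 0 ∨ x = Q ^ (n % 2) * U ^ (n / 2) := by
  obtain ⟨p, hp, rfl⟩ := h
  set t : Fin 2 →₀ ℕ := Finsupp.single 0 (n / 2) + Finsupp.single 1 (n % 2)
  have hp_t : mkR p = mkR (monomial t (coeff t p)) := by
    conv_lhs => rw [p.as_sum, map_sum]
    refine Finset.sum_eq_single t (fun d hd hdt ↦ mkR_monomial_of_two_le ?_ _) (fun ht ↦ ?_)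
    · by_contra! h1
      exact hdt (eq_of_weight_wt_eq (hp (mem_support_iff.1 hd)) h1)
    · rw [notMem_support_iff.1 ht, monomial_zero, map_zero]
  rw [hp_t]
  generalize coeff t p = c
  obtain rfl | rfl : c = 0 ∨ c = 1 := by decide +revert
  · simp
  · exact Or.inr (mkR_monomial_single_add_single _ _)

lemma exists_pow_mem_of_map_eq_top {R : Type*} [CommRing R] {u : R} {J : Ideal R}
    (h : J.map (algebraMap R (Localization.Away u)) = ⊤) : ∃ k : ℕ, u ^ k ∈ J := by
  have hmeet : ¬Disjoint (Submonoid.powers u : Set R) J :=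
    (IsLocalization.map_algebraMap_ne_top_iff_disjoint _ _ J).not.1 (not_not.2 h)
  obtain ⟨_, ⟨k, rfl⟩, hk⟩ := Set.not_disjoint_iff.1 hmeet
  exact ⟨k, hk⟩

lemma IsGradedIdeal.le_span {J : Ideal RUQ} (hJ : IsGradedIdeal J) :
    J ≤ Ideal.span {U ^ sInf {k : ℕ | U ^ k ∈ J}, Q * U ^ sInf {k : ℕ | Q * U ^ k ∈ J}} := by
  refine hJ.trans_le (Ideal.span_le.2 ?_)
  rintro x ⟨hxJ, n, hx⟩
  rcases hx.eq_zero_or_eq_Q_pow_mul_U_pow with rfl | rfl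
  · exact zero_mem _
  rcases Nat.mod_two_eq_zero_or_one n with h | h <;> rw [h] at hxJ ⊢
  · rw [pow_zero, one_mul] at hxJ ⊢
    have hi := Nat.sInf_le (s := {k | U ^ k ∈ J}) hxJ
    exact Ideal.mem_of_dvd _ (pow_dvd_pow U hi) (Ideal.subset_span (by simp))
  · rw [pow_one] at hxJ ⊢
    have hj := Nat.sInf_le (s := {k | Q * U ^ k ∈ J}) hxJ
    exact Ideal.mem_of_dvd _ (mul_dvd_mul_left Q (pow_dvd_pow U hj)) (Ideal.subset_span (by simp))

/-- for a graded ideal `J` of `F₂[U,Q]/(Q²)` with `U⁻¹J = U⁻¹R`, setting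
`i = min{k ≥ 0 : Uᵏ ∈ J}` and `j = min{k ≥ 0 : Q·Uᵏ ∈ J}`, both minima exist,
`j ≤ i`, and `J = (Uⁱ, Q·Uʲ)`. -/
theorem stmt1 (J : Ideal RUQ) (hgraded : IsGradedIdeal J)
    (hloc : Ideal.map (algebraMap RUQ (Localization.Away U)) J = ⊤) :
    (∃ k : ℕ, U ^ k ∈ J) ∧ (∃ k : ℕ, Q * U ^ k ∈ J) ∧
      sInf {k : ℕ | Q * U ^ k ∈ J} ≤ sInf {k : ℕ | U ^ k ∈ J} ∧
      J = Ideal.span {U ^ sInf {k : ℕ | U ^ k ∈ J},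
        Q * U ^ sInf {k : ℕ | Q * U ^ k ∈ J}} := by
  have hU : ∃ k : ℕ, U ^ k ∈ J := exists_pow_mem_of_map_eq_top hloc
  have hQ : ∃ k : ℕ, Q * U ^ k ∈ J := hU.imp fun _ ↦ J.mul_mem_left Q
  have hi : U ^ sInf {k : ℕ | U ^ k ∈ J} ∈ J := Nat.sInf_mem hU
  refine ⟨hU, hQ, Nat.sInf_le (J.mul_mem_left Q hi), hgraded.le_span.antisymm ?_⟩
  rw [Ideal.span_le, Set.insert_subset_iff, Set.singleton_subset_iff]
  exact ⟨hi, Nat.sInf_mem hQ⟩
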